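/- Let g ≥ 2 be an integer, let D > 3 be a squarefree positive integer, and let X, Y be positive integers with X² + D = 4Y^g and 16·Y^g < (1 + D)². If 𝔞 is an integral ideal of the ring of integers O of K = ℚ(√−D) such that 𝔞^g equals the principal ideal generated by (X + √−D)/2, then the class of 𝔞 in the ideal class group Cl(ℚ(√−D)) has order exactly g. -/

import Mathlib

open NumberField IntermediateField Polynomial
open scoped nonZeroDivisors

/-- The complex number `√-d = i·√d`. -/
noncomputable def sqrtNeg (d : ℕ) : ℂ := Complex.I * Real.sqrt d

theorem isIntegral_sqrtNeg (d : ℕ) : IsIntegral ℚ (sqrtNeg d) := by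
  refine ⟨X ^ 2 + C (d : ℚ), monic_X_pow_add_C _ two_ne_zero, ?_⟩
  have h : ((Real.sqrt d : ℝ) : ℂ) ^ 2 = (d : ℂ) := by
    rw [← Complex.ofReal_pow, Real.sq_sqrt (Nat.cast_nonneg d)]
    simp
  simp only [eval₂_add, eval₂_pow, eval₂_X, eval₂_C, sqrtNeg, mul_pow, Complex.I_sq, h]
  push_cast
  ring

/-- The imaginary quadratic field `K = ℚ(√-d)`, realized inside `ℂ`. -/
noncomputable def Kneg (d : ℕ) : IntermediateField ℚ ℂ := ℚ⟮sqrtNeg d⟯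

instance (d : ℕ) : FiniteDimensional ℚ (Kneg d) :=
  IntermediateField.adjoin.finiteDimensional (isIntegral_sqrtNeg d)

instance (d : ℕ) : NumberField (Kneg d) := ⟨⟩

/-!
Let `o` be the order of the class of `𝔞` and write `𝔞 ^ o = (α)`, `g = o * k`. Since `D > 3` the
only units are `±1`, so `β = ±α ^ k`, and `α - ᾱ` divides `α ^ k - ᾱ ^ k = ±(β - β̄) = ±√-D` among
algebraic integers. As `D` is squarefree, the integers of `K` are the `(a + b√-D) / 2` with
`a, b ∈ ℤ`; the divisibility forces `b = ±1`, so `4 N(α) = a ^ 2 + D` with `a ≠ 0` because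
`4 ∤ D`. For `k ≥ 2` this gives `16 Y ^ g = 16 N(α) ^ k ≥ (4 N(α)) ^ 2 ≥ (1 + D) ^ 2`, which the
hypothesis excludes; hence `k = 1`.
-/

open Complex ComplexConjugate

theorem sqrtNeg_sq (d : ℕ) : sqrtNeg d ^ 2 = -d := by
  simp [sqrtNeg, mul_pow, ← ofReal_pow]

@[simp] theorem sqrtNeg_re (d : ℕ) : (sqrtNeg d).re = 0 := by simp [sqrtNeg]

@[simp] theorem sqrtNeg_im (d : ℕ) : (sqrtNeg d).im = √d := by simp [sqrtNeg]

@[simp] theorem conj_sqrtNeg (d : ℕ) : conj (sqrtNeg d) = -sqrtNeg d := by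
  simp [sqrtNeg]

theorem exists_rat_of_mem_Kneg {d : ℕ} {z : ℂ} (hz : z ∈ Kneg d) :
    ∃ x y : ℚ, z = x + y * sqrtNeg d := by
  have hz' : z ∈ Algebra.adjoin ℚ {sqrtNeg d} := by
    rwa [← adjoin_simple_toSubalgebra_of_isAlgebraic (isIntegral_sqrtNeg d).isAlgebraic]
  clear hz
  induction hz' using Algebra.adjoin_induction with
  | mem x hx => exact ⟨0, 1, by rw [Set.mem_singleton_iff.mp hx]; simp⟩
  | algebraMap q => exact ⟨q, 0, by simp⟩
  | add x y _ _ hx hy =>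
    obtain ⟨a, b, rfl⟩ := hx
    obtain ⟨a', b', rfl⟩ := hy
    exact ⟨a + a', b + b', by push_cast; ring⟩
  | mul x y _ _ hx hy =>
    obtain ⟨a, b, rfl⟩ := hx
    obtain ⟨a', b', rfl⟩ := hy
    refine ⟨a * a' - d * b * b', a * b' + a' * b, ?_⟩
    push_cast
    linear_combination (b * b' : ℂ) * sqrtNeg_sq d

theorem IsIntegral.conj {z : ℂ} (hz : IsIntegral ℤ z) : IsIntegral ℤ (conj z) :=
  hz.map (starRingEnd ℂ).toIntAlgHom

theorem exists_int_eq_of_isIntegral_ratCast {K : Type*} [Field K] [CharZero K] {q : ℚ}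
    (hq : IsIntegral ℤ (q : K)) : ∃ n : ℤ, (n : ℚ) = q := by
  rw [← eq_ratCast (algebraMap ℚ K),
    isIntegral_algebraMap_iff (algebraMap ℚ K).injective] at hq
  exact IsIntegrallyClosed.isIntegral_iff.mp hq

theorem exists_int_eq_of_squarefree_mul_sq {d : ℤ} (hd : Squarefree d) {q : ℚ} {m : ℤ}
    (hq : d * q ^ 2 = m) : ∃ b : ℤ, (b : ℚ) = q := by
  have hden : (q.den : ℤ) ^ 2 ∣ d * q.num ^ 2 := by
    refine ⟨m, ?_⟩
    rw [← Rat.num_div_den q] at hq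
    field_simp at hq
    exact_mod_cast hq
  have hcop : IsCoprime ((q.den : ℤ) ^ 2) (q.num ^ 2) :=
    (Int.isCoprime_iff_gcd_eq_one.mpr (by rw [Int.gcd_comm]; exact q.reduced)).pow
  have hunit := hd (q.den : ℤ) (by simpa [sq] using hcop.dvd_of_dvd_mul_right hden)
  refine ⟨q.num, ?_⟩
  have : q.den = 1 := by simpa using Int.isUnit_iff_natAbs_eq.mp hunit
  exact_mod_cast Rat.coe_int_num_of_den_eq_one this

theorem normSq_add_mul_sqrtNeg (d : ℕ) (x y : ℝ) :
    normSq (x + y * sqrtNeg d) = x ^ 2 + d * y ^ 2 := by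
  simp only [normSq_apply, add_re, add_im, mul_re, mul_im, ofReal_re, ofReal_im, sqrtNeg_re,
    sqrtNeg_im, mul_zero, zero_mul, sub_self, add_zero, zero_add]
  linear_combination y ^ 2 * Real.sq_sqrt (Nat.cast_nonneg d)

theorem IsIntegral.ofReal_normSq {z : ℂ} (hz : IsIntegral ℤ z) :
    IsIntegral ℤ (normSq z : ℂ) :=
  mul_conj z ▸ hz.mul hz.conj

theorem IsIntegral.ofReal_two_mul_re {z : ℂ} (hz : IsIntegral ℤ z) :
    IsIntegral ℤ ((2 * z.re : ℝ) : ℂ) :=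
  add_conj z ▸ hz.add hz.conj

section

variable {d : ℕ} {z : ℂ}

theorem exists_int_normSq_eq (hzK : z ∈ Kneg d) (hz : IsIntegral ℤ z) :
    ∃ n : ℤ, normSq z = n := by
  obtain ⟨x, y, rfl⟩ := exists_rat_of_mem_Kneg hzK
  have hN : normSq (x + y * sqrtNeg d) = ((x ^ 2 + d * y ^ 2 : ℚ) : ℝ) := by
    simpa using normSq_add_mul_sqrtNeg d x y
  obtain ⟨n, hn⟩ := exists_int_eq_of_isIntegral_ratCast (K := ℂ) (q := x ^ 2 + d * y ^ 2)
    (by simpa only [hN, ofReal_ratCast] using hz.ofReal_normSq)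
  exact ⟨n, by rw [hN, ← hn]; push_cast; rfl⟩

theorem exists_int_eq_half_add_mul_sqrtNeg (hsf : Squarefree d) (hzK : z ∈ Kneg d)
    (hz : IsIntegral ℤ z) : ∃ a b : ℤ, z = (a + b * sqrtNeg d) / 2 := by
  obtain ⟨n, hn⟩ := exists_int_normSq_eq hzK hz
  obtain ⟨x, y, rfl⟩ := exists_rat_of_mem_Kneg hzK
  have hre : ((2 * (x + y * sqrtNeg d : ℂ).re : ℝ) : ℂ) = ((2 * x : ℚ) : ℂ) := by simp
  obtain ⟨a, ha⟩ := exists_int_eq_of_isIntegral_ratCast (hre ▸ hz.ofReal_two_mul_re)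
  have hN : x ^ 2 + d * y ^ 2 = n := by
    exact_mod_cast (normSq_add_mul_sqrtNeg d x y).symm.trans hn
  obtain ⟨b, hb⟩ := exists_int_eq_of_squarefree_mul_sq (Int.squarefree_natCast.mpr hsf)
    (q := 2 * y) (m := 4 * n - a ^ 2) (by push_cast; linear_combination 4 * hN + (a + 2 * x) * ha)
  refine ⟨a, b, ?_⟩
  have ha' : (a : ℂ) = 2 * x := by exact_mod_cast congrArg (Rat.cast : ℚ → ℂ) ha
  have hb' : (b : ℂ) = 2 * y := by exact_mod_cast congrArg (Rat.cast : ℚ → ℂ) hb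
  rw [ha', hb']
  ring

theorem four_mul_normSq_half_add_mul_sqrtNeg (d : ℕ) (a b : ℤ) :
    4 * normSq ((a + b * sqrtNeg d) / 2) = a ^ 2 + d * b ^ 2 := by
  have hz : ((a + b * sqrtNeg d) / 2 : ℂ) = ((a / 2 : ℝ) : ℂ) + ((b / 2 : ℝ) : ℂ) * sqrtNeg d := by
    push_cast
    ring
  rw [hz, normSq_add_mul_sqrtNeg]
  ring

theorem half_add_mul_sqrtNeg_sub_conj (d : ℕ) (a b : ℤ) :
    (a + b * sqrtNeg d) / 2 - conj ((a + b * sqrtNeg d) / 2) = b * sqrtNeg d := by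
  simp only [map_div₀, map_add, map_mul, map_intCast, conj_sqrtNeg, map_ofNat]
  ring

theorem sqrtNeg_ne_zero (hd : d ≠ 0) : sqrtNeg d ≠ 0 := by
  intro h
  simpa [hd] using congrArg im h

theorem exists_isIntegral_sub_mul_eq_pow_sub_pow {R A : Type*} [CommRing R] [CommRing A]
    [Algebra R A] {x y : A} (hx : IsIntegral R x) (hy : IsIntegral R y) (k : ℕ) :
    ∃ c, IsIntegral R c ∧ (x - y) * c = x ^ k - y ^ k := by
  obtain ⟨c, hc⟩ := sub_dvd_pow_sub_pow (⟨x, hx⟩ : integralClosure R A) ⟨y, hy⟩ k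
  exact ⟨c, c.2, congrArg Subtype.val hc.symm⟩

theorem exists_sq_add_eq_four_mul_normSq (hsf : Squarefree d) (hzK : z ∈ Kneg d)
    (hz : IsIntegral ℤ z) {c : ℂ} (hc : IsIntegral ℤ c) (hzc : (z - conj z) * c = sqrtNeg d) :
    ∃ a : ℤ, (a ^ 2 + d : ℝ) = 4 * normSq z := by
  obtain ⟨a, b, rfl⟩ := exists_int_eq_half_add_mul_sqrtNeg hsf hzK hz
  have hbc : (b : ℂ) * c = 1 := by
    rw [half_add_mul_sqrtNeg_sub_conj] at hzc
    exact mul_left_cancel₀ (sqrtNeg_ne_zero hsf.ne_zero) (by linear_combination hzc)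
  have hb0 : b ≠ 0 := by rintro rfl; simp at hbc
  obtain ⟨m, hm⟩ := exists_int_eq_of_isIntegral_ratCast (K := ℂ) (q := (b : ℚ)⁻¹)
    (by rwa [Rat.cast_inv, Rat.cast_intCast, ← eq_inv_of_mul_eq_one_right hbc])
  have hbm : b * m = 1 := by
    exact_mod_cast (show (b : ℚ) * m = 1 by rw [hm]; field_simp)
  have hb : b ^ 2 = 1 := by
    rcases Int.eq_one_or_neg_one_of_mul_eq_one hbm with rfl | rfl <;> rfl
  refine ⟨a, ?_⟩
  rw [four_mul_normSq_half_add_mul_sqrtNeg]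
  exact_mod_cast (by rw [hb, mul_one] : (a ^ 2 + d : ℤ) = a ^ 2 + d * b ^ 2)

theorem algebraMap_ringOfIntegers_mem_Kneg (x : 𝓞 (Kneg d)) :
    algebraMap (𝓞 (Kneg d)) ℂ x ∈ Kneg d :=
  (x : Kneg d).2

theorem isIntegral_algebraMap_ringOfIntegers (x : 𝓞 (Kneg d)) :
    IsIntegral ℤ (algebraMap (𝓞 (Kneg d)) ℂ x) :=
  (RingOfIntegers.isIntegral x).algebraMap

theorem algebraMap_ringOfIntegers_injective :
    Function.Injective (algebraMap (𝓞 (Kneg d)) ℂ) :=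
  fun _ _ h ↦ RingOfIntegers.ext (Subtype.ext h)

theorem Kneg.units_eq_one_or_neg_one (hd : 3 < d) (hsf : Squarefree d) (u : (𝓞 (Kneg d))ˣ) :
    u = 1 ∨ u = -1 := by
  set ι := algebraMap (𝓞 (Kneg d)) ℂ
  have hnorm (v : (𝓞 (Kneg d))ˣ) : ∃ n : ℤ, normSq (ι v) = n :=
    exists_int_normSq_eq (algebraMap_ringOfIntegers_mem_Kneg _)
      (isIntegral_algebraMap_ringOfIntegers _)
  obtain ⟨n, hn⟩ := hnorm u
  obtain ⟨n', hn'⟩ := hnorm u⁻¹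
  have hnn' : n * n' = 1 := by
    have : normSq (ι u) * normSq (ι ↑u⁻¹) = 1 := by
      rw [← map_mul, ← map_mul, Units.mul_inv, map_one, map_one]
    rw [hn, hn'] at this
    exact_mod_cast this
  have hn1 : n = 1 :=
    Int.eq_one_of_mul_eq_one_right (by exact_mod_cast hn ▸ normSq_nonneg _) hnn'
  obtain ⟨a, b, hab⟩ := exists_int_eq_half_add_mul_sqrtNeg hsf
    (algebraMap_ringOfIntegers_mem_Kneg (u : 𝓞 (Kneg d)))
    (isIntegral_algebraMap_ringOfIntegers (u : 𝓞 (Kneg d)))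
  have h4 : a ^ 2 + d * b ^ 2 = 4 := by
    have := four_mul_normSq_half_add_mul_sqrtNeg d a b
    rw [← hab, hn, hn1] at this
    exact_mod_cast this.symm
  have hb : b = 0 := by
    by_contra hb
    have : (d : ℤ) ≤ 4 := by nlinarith [sq_nonneg a, Int.one_le_abs hb, sq_abs b]
    have : d = 4 := by omega
    exact (by decide : ¬ Squarefree 4) (this ▸ hsf)
  subst hb
  have ha : a = 2 ∨ a = -2 := by
    have : (a - 2) * (a + 2) = 0 := by linear_combination h4
    rcases mul_eq_zero.mp this with h | h
    · exact .inl (by linarith)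
    · exact .inr (by linarith)
  refine ha.imp (fun ha ↦ ?_) (fun ha ↦ ?_) <;>
  · refine Units.ext (algebraMap_ringOfIntegers_injective ?_)
    rw [hab, ha]
    norm_num

theorem Kneg.not_associated_pow (hd : 3 < d) (hsf : Squarefree d) {β : 𝓞 (Kneg d)}
    (hβ : algebraMap _ ℂ β - conj (algebraMap _ ℂ β) = sqrtNeg d)
    (hβ_small : 16 * normSq (algebraMap _ ℂ β) < (1 + d) ^ 2)
    (α : 𝓞 (Kneg d)) {k : ℕ} (hk : 2 ≤ k) : ¬ Associated (α ^ k) β := by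
  rintro ⟨u, rfl⟩
  set z := algebraMap (𝓞 (Kneg d)) ℂ α
  have hzK : z ∈ Kneg d := algebraMap_ringOfIntegers_mem_Kneg α
  have hz : IsIntegral ℤ z := isIntegral_algebraMap_ringOfIntegers α
  have hβz : algebraMap _ ℂ (α ^ k * u) = z ^ k ∨ algebraMap _ ℂ (α ^ k * u) = -z ^ k := by
    rcases Kneg.units_eq_one_or_neg_one hd hsf u with rfl | rfl <;> simp [z]
  obtain ⟨c, hc, hzc⟩ := exists_isIntegral_sub_mul_eq_pow_sub_pow hz hz.conj k
  obtain ⟨a, ha⟩ : ∃ a : ℤ, (a ^ 2 + d : ℝ) = 4 * normSq z := by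
    rcases hβz with h | h <;> rw [h] at hβ
    · refine exists_sq_add_eq_four_mul_normSq hsf hzK hz hc ?_
      rw [hzc, ← hβ, map_pow]
    · refine exists_sq_add_eq_four_mul_normSq hsf hzK hz hc.neg ?_
      rw [mul_neg, hzc, ← hβ, map_neg, map_pow]
      ring
  obtain ⟨n, hn⟩ := exists_int_normSq_eq hzK hz
  have hβn : normSq (algebraMap _ ℂ (α ^ k * u)) = n ^ k := by
    rcases hβz with h | h <;> simp [h, hn]
  rw [hβn] at hβ_small
  have h4n : a ^ 2 + d = 4 * n := by
    rw [hn] at ha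
    exact_mod_cast ha
  have hsmall : 16 * n ^ k < (1 + d : ℤ) ^ 2 := by exact_mod_cast hβ_small
  have ha0 : a ≠ 0 := by
    rintro rfl
    have h4d : ((2 * 2 : ℕ) : ℤ) ∣ d := ⟨n, by push_cast; linarith⟩
    rw [Int.natCast_dvd_natCast] at h4d
    exact absurd (Nat.isUnit_iff.mp (hsf 2 h4d)) (by norm_num)
  have ha2 : 1 ≤ a ^ 2 := one_le_sq_iff_one_le_abs _ |>.mpr (Int.one_le_abs ha0)
  have hn1 : 1 ≤ n := by linarith
  have : (1 + d : ℤ) ^ 2 ≤ 16 * n ^ k := calc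
    (1 + d : ℤ) ^ 2 ≤ (a ^ 2 + d) ^ 2 := by gcongr
    _ = 16 * n ^ 2 := by rw [h4n]; ring
    _ ≤ 16 * n ^ k := by gcongr
  linarith

end

theorem orderOf_mk0_eq_of_pow_eq_span {R : Type*} [CommRing R] [IsDedekindDomain R] {g : ℕ}
    (hg : g ≠ 0) {β : R} (hβ : ∀ (α : R) (k : ℕ), 2 ≤ k → ¬ Associated (α ^ k) β)
    (𝔞 : (Ideal R)⁰) (h𝔞 : (𝔞 : Ideal R) ^ g = Ideal.span {β}) :
    orderOf (ClassGroup.mk0 𝔞) = g := by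
  have hpow : ClassGroup.mk0 𝔞 ^ g = 1 := by
    rw [← map_pow, ClassGroup.mk0_eq_one_iff (𝔞 ^ g).2, SubmonoidClass.coe_pow, h𝔞]
    exact ⟨β, rfl⟩
  obtain ⟨k, hk⟩ := orderOf_dvd_of_pow_eq_one hpow
  obtain ⟨α, hα⟩ := ((ClassGroup.mk0_eq_one_iff (𝔞 ^ orderOf (ClassGroup.mk0 𝔞)).2).mp
    (by rw [map_pow]; exact pow_orderOf_eq_one _)).principal
  rw [Ideal.submodule_span_eq, SubmonoidClass.coe_pow] at hα
  have hαβ : Associated (α ^ k) β := by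
    rw [← Ideal.span_singleton_eq_span_singleton, ← Ideal.span_singleton_pow, ← hα,
      ← pow_mul, ← hk, h𝔞]
  have hk0 : k ≠ 0 := by rintro rfl; exact hg hk
  obtain rfl : k = 1 := by
    by_contra hk1
    exact hβ α k (by omega) hαβ
  simpa using hk.symm

theorem stmt6_general (g D X Y : ℕ) (hg : 2 ≤ g) (hD : 3 < D) (hsf : Squarefree D)
    (h : X ^ 2 + D = 4 * Y ^ g)
    (hsmall : 16 * Y ^ g < (1 + D) ^ 2)
    (β : RingOfIntegers (Kneg D)) (hβ : ((β : Kneg D) : ℂ) = ((X : ℂ) + sqrtNeg D) / 2)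
    (𝔞 : (Ideal (RingOfIntegers (Kneg D)))⁰) (h𝔞 : (𝔞 : Ideal (RingOfIntegers (Kneg D))) ^ g = Ideal.span {β}) :
    orderOf (ClassGroup.mk0 𝔞) = g := by
  have hβ' : algebraMap (𝓞 (Kneg D)) ℂ β = (((X : ℤ) : ℂ) + ((1 : ℤ) : ℂ) * sqrtNeg D) / 2 := by
    push_cast
    rw [one_mul]
    exact hβ
  have hβ_small : 16 * normSq (algebraMap (𝓞 (Kneg D)) ℂ β) < (1 + D) ^ 2 := by
    have hN := four_mul_normSq_half_add_mul_sqrtNeg D X 1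
    rw [← hβ'] at hN
    have hXY : ((X ^ 2 + D : ℕ) : ℝ) = 4 * Y ^ g := by exact_mod_cast h
    have hY : (16 * Y ^ g : ℝ) < (1 + D) ^ 2 := by exact_mod_cast hsmall
    push_cast at hN hXY
    linarith
  refine orderOf_mk0_eq_of_pow_eq_span (by omega) (fun α k hk ↦ ?_) 𝔞 h𝔞
  refine Kneg.not_associated_pow hD hsf ?_ hβ_small α hk
  rw [hβ', half_add_mul_sqrtNeg_sub_conj]
  simp

theorem stmt6 (g D X Y : ℕ) (hg : 2 ≤ g) (hD : 3 < D) (hsf : Squarefree D)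
    (hX : 0 < X) (hY : 0 < Y) (h : X ^ 2 + D = 4 * Y ^ g)
    (hsmall : 16 * Y ^ g < (1 + D) ^ 2)
    (β : RingOfIntegers (Kneg D)) (hβ : ((β : Kneg D) : ℂ) = ((X : ℂ) + sqrtNeg D) / 2)
    (𝔞 : (Ideal (RingOfIntegers (Kneg D)))⁰) (h𝔞 : (𝔞 : Ideal (RingOfIntegers (Kneg D))) ^ g = Ideal.span {β}) :
    orderOf (ClassGroup.mk0 𝔞) = g :=
  stmt6_general g D X Y hg hD hsf h hsmall β hβ 𝔞 h𝔞
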